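/- Define C_{α,λ}(τ) = (1/(√π Γ(α)))(|τ|/(2λ))^{α-1/2} K_{α-1/2}(λ|τ|) for τ ≠ 0 and C_{α,λ}(0) = Γ(2α-1)/(Γ(α)² (2λ)^{2α-1}), with α > 1/2, λ > 0. Then the reduced covariance Ĉ(t,s) = C_{α,λ}(t-s) − C_{α,λ}(t) − C_{α,λ}(s) + C_{α,λ}(0) can be written as Ĉ(t,s) = (1/2)[c_t|t|^{2H} + c_s|s|^{2H} − c_{t−s}|t−s|^{2H}], where H = α − 1/2 and c_τ = 2Γ(2H)/(Γ(H+1/2)²(2λ|τ|)^{2H}) − (2/(√π Γ(H+1/2)))(1/(2λ|τ|))^H K_H(λ|τ|) for τ ≠ 0, c_0 = 0. -/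

import Mathlib

open Real

/-- Modified Bessel function of the second kind, via its integral representation. -/
noncomputable def besselK (ν x : ℝ) : ℝ :=
  ∫ t in Set.Ioi (0 : ℝ), Real.exp (-x * Real.cosh t) * Real.cosh (ν * t)

/-- Covariance of the Weyl fractional Ornstein-Uhlenbeck process. -/
noncomputable def fouCov (α lam τ : ℝ) : ℝ :=
  if τ = 0 then Real.Gamma (2*α - 1) / (Real.Gamma α ^ 2 * (2*lam) ^ (2*α - 1))
  else (1 / (Real.sqrt π * Real.Gamma α)) * (|τ| / (2*lam)) ^ (α - 1/2) *
    besselK (α - 1/2) (lam * |τ|)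

/-- FBM-like coefficient in the TFBM covariance. -/
noncomputable def tfbmCoeff (H lam τ : ℝ) : ℝ :=
  if τ = 0 then 0
  else 2 * Real.Gamma (2*H) / (Real.Gamma (H + 1/2) ^ 2 * (2*lam*|τ|) ^ (2*H))
    - (2 / (Real.sqrt π * Real.Gamma (H + 1/2))) * (1 / (2*lam*|τ|)) ^ H *
        besselK H (lam * |τ|)

/-! The whole identity comes from `c_τ |τ|^{2H} = 2 (C(0) - C(τ))`: the first term of `c_τ` loses its
`|τ|`-dependence to give `2 C(0)`, the Bessel term becomes `2 C(τ)`, and the reduced covariance is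
then the polarization of `τ ↦ C(0) - C(τ)`. -/

lemma div_mul_mul_rpow_mul_rpow_cancel (b c : ℝ) {a x : ℝ} (ha : 0 ≤ a) (hx : 0 < x) (p : ℝ) :
    c / (b * (a * x) ^ p) * x ^ p = c / (b * a ^ p) := by
  rw [mul_rpow ha hx.le, ← mul_assoc, div_mul_eq_mul_div,
    mul_div_mul_right _ _ (rpow_pos_of_pos hx p).ne']

lemma one_div_mul_rpow_mul_rpow_two_mul {a x : ℝ} (ha : 0 < a) (hx : 0 < x) (H : ℝ) :
    (1 / (a * x)) ^ H * x ^ (2 * H) = (x / a) ^ H := by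
  rw [rpow_mul hx.le, rpow_two, ← mul_rpow (by positivity) (by positivity)]
  congr 1
  field_simp

lemma tfbmCoeff_mul_abs_rpow (H : ℝ) {lam : ℝ} (hlam : 0 < lam) (τ : ℝ) :
    tfbmCoeff H lam τ * |τ| ^ (2 * H) = 2 * (fouCov (H + 1/2) lam 0 - fouCov (H + 1/2) lam τ) := by
  rcases eq_or_ne τ 0 with rfl | hτ
  · simp [tfbmCoeff, fouCov]
  have hx : 0 < |τ| := abs_pos.mpr hτ
  have hL : 0 < 2 * lam := by positivity
  simp only [tfbmCoeff, fouCov, if_neg hτ, ↓reduceIte, add_sub_cancel_right,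
    show 2 * (H + 1/2) - 1 = 2 * H by ring]
  rw [sub_mul, div_mul_mul_rpow_mul_rpow_cancel _ _ hL.le hx,
    ← one_div_mul_rpow_mul_rpow_two_mul hL hx]
  ring

theorem stmt3 (α lam t s : ℝ) (hlam : 0 < lam) :
    fouCov α lam (t - s) - fouCov α lam t - fouCov α lam s + fouCov α lam 0
      = (1/2) * (tfbmCoeff (α - 1/2) lam t * |t| ^ (2*(α - 1/2))
          + tfbmCoeff (α - 1/2) lam s * |s| ^ (2*(α - 1/2))
          - tfbmCoeff (α - 1/2) lam (t - s) * |t - s| ^ (2*(α - 1/2))) := by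
  have hcoeff (τ : ℝ) := tfbmCoeff_mul_abs_rpow (α - 1/2) hlam τ
  simp only [sub_add_cancel] at hcoeff
  rw [hcoeff t, hcoeff s, hcoeff (t - s)]
  ring
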